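/- In any skew brace $A$, $\mathrm{Ann}_n(A) * A^{n-k} \subseteq \mathrm{Ann}_k(A)$ for all $n \geq 1$ and $0 \leq k \leq n-1$, where $A^m$ denotes the $m$-th term of the left series. -/
import Mathlib


namespace SB

class SkewBrace (A : Type*) extends Group A where
  circ : A → A → A
  sinv : A → A
  circ_assoc : ∀ a b c : A, circ (circ a b) c = circ a (circ b c)
  one_circ : ∀ a : A, circ 1 a = a
  circ_one : ∀ a : A, circ a 1 = a
  sinv_circ : ∀ a : A, circ (sinv a) a = 1
  circ_sinv : ∀ a : A, circ a (sinv a) = 1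
  brace : ∀ a b c : A, circ a (b * c) = circ a b * a⁻¹ * circ a c

open SkewBrace

variable {A : Type*} [SkewBrace A]

/-- The lambda map: `lam a b = a⁻¹ ⬝ (a ∘ b)`. -/
def lam (a b : A) : A := a⁻¹ * circ a b

/-- The star product: `star a b = a⁻¹ ⬝ (a ∘ b) ⬝ b⁻¹`. -/
def star (a b : A) : A := a⁻¹ * circ a b * b⁻¹

/-- For sets X, Y, the subgroup of (A, mul) generated by all star products x * y. -/
def starSub (X Y : Set A) : Subgroup A :=
  Subgroup.closure {z | ∃ x ∈ X, ∃ y ∈ Y, z = star x y}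

/-- The left series: `leftSeries n` is the term A^(n+1), so `leftSeries 0 = A`. -/
def leftSeries : ℕ → Subgroup A
  | 0 => ⊤
  | n + 1 => starSub (Set.univ) ((leftSeries n : Subgroup A) : Set A)

/-- The right series: `rightSeries n` is the term A^((n+1)), so `rightSeries 0 = A`. -/
def rightSeries : ℕ → Subgroup A
  | 0 => ⊤
  | n + 1 => starSub ((rightSeries n : Subgroup A) : Set A) (Set.univ)

/-- The commutator of x and a with respect to the circle operation. -/
def circCommutator (x a : A) : A := circ (circ (circ x a) (sinv x)) (sinv a)

/-- Internal description of the socle of the quotient by an ideal with underlying set S: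
elements x whose class lies in ker(lambda) and in the center of the additive group of the quotient. -/
def socStep (S : Set A) : Set A :=
  {x | ∀ a : A, star x a ∈ S ∧ x * a * x⁻¹ * a⁻¹ ∈ S}

/-- The socle series: Soc_0 = 1, Soc_(n+1)/Soc_n = Soc(A/Soc_n). -/
def socSeries : ℕ → Set A
  | 0 => {1}
  | n + 1 => socStep (socSeries n)

/-- Internal description of the annihilator of the quotient by an ideal with underlying set S. -/
def annStep (S : Set A) : Set A :=
  {x | ∀ a : A, star x a ∈ S ∧ x * a * x⁻¹ * a⁻¹ ∈ S ∧ circCommutator x a ∈ S}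

/-- The annihilator series: Ann_0 = 1, Ann_(n+1)/Ann_n = Ann(A/Ann_n). -/
def annSeries : ℕ → Set A
  | 0 => {1}
  | n + 1 => annStep (annSeries n)

/-! ### Basic lemmas on the circle group -/

lemma sinv_circ_cancel (a x : A) : circ (sinv a) (circ a x) = x := by
  rw [← circ_assoc, sinv_circ, one_circ]

lemma circ_sinv_cancel (a x : A) : circ a (circ (sinv a) x) = x := by
  rw [← circ_assoc, circ_sinv, one_circ]

lemma sinv_one : (sinv (1:A)) = 1 := by
  have h := sinv_circ (1:A); rwa [circ_one] at h

lemma sinv_sinv (a : A) : sinv (sinv a) = a := by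
  have h := sinv_circ_cancel (sinv a) a
  rwa [sinv_circ, circ_one] at h

lemma sinv_circ_rev (a b : A) : sinv (circ a b) = circ (sinv b) (sinv a) := by
  have h1 : circ (circ a b) (circ (sinv b) (sinv a)) = 1 := by
    rw [circ_assoc, circ_sinv_cancel, circ_sinv]
  have h2 := sinv_circ_cancel (circ a b) (circ (sinv b) (sinv a))
  rwa [h1, circ_one] at h2

/-! ### lam and star lemmas -/

lemma star_eq (x y : A) : star x y = lam x y * y⁻¹ := rfl

lemma circ_eq (a b : A) : circ a b = a * lam a b := by
  rw [lam, mul_inv_cancel_left]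

lemma lam_eq_star_mul (x y : A) : lam x y = star x y * y := by
  rw [star_eq, inv_mul_cancel_right]

lemma lam_mul (a b c : A) : lam a (b * c) = lam a b * lam a c := by
  simp only [lam, brace]; group

lemma lam_one_right (a : A) : lam a 1 = 1 := by
  simp [lam, circ_one]

lemma lam_one_left (b : A) : lam 1 b = b := by
  simp [lam, one_circ]

lemma lam_inv (a b : A) : lam a b⁻¹ = (lam a b)⁻¹ := by
  have h := lam_mul a b b⁻¹
  rw [mul_inv_cancel, lam_one_right] at h
  rw [eq_comm, inv_eq_iff_mul_eq_one, ← h]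

lemma lam_sinv (a : A) : lam a (sinv a) = a⁻¹ := by
  rw [lam, circ_sinv, mul_one]

lemma lam_circ (a b c : A) : lam (circ a b) c = lam a (lam b c) := by
  have h2 := lam_inv a b
  simp only [lam] at h2
  have h3 : circ a b⁻¹ = a * (a⁻¹ * circ a b)⁻¹ := by rw [← h2]; group
  simp only [lam]
  rw [brace, ← circ_assoc, h3]
  group

lemma lam_sinv_inv (z : A) : lam (sinv z) z⁻¹ = sinv z := by
  rw [lam_inv, lam, sinv_circ, mul_one, inv_inv]

lemma star_one_right (x : A) : star x 1 = 1 := by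
  rw [star_eq, lam_one_right, inv_one, mul_one]

lemma star_one_left (y : A) : star 1 y = 1 := by
  rw [star_eq, lam_one_left, mul_inv_cancel]

lemma star_mul_right (x b c : A) : star x (b * c) = star x b * (b * star x c * b⁻¹) := by
  simp only [star_eq, lam_mul]; group

lemma star_inv_right (x b : A) : star x b⁻¹ = b⁻¹ * (star x b)⁻¹ * b := by
  simp only [star_eq, lam_inv]; group

lemma star_circ_left (x a b : A) :
    star (circ x a) b = star x (star a b) * star a b * star x b := by
  simp only [star_eq]
  rw [lam_circ, lam_mul, lam_inv]
  group

lemma circCommutator_eq (x a : A) :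
    circCommutator x a = circ (circ x a) (sinv (circ a x)) := by
  rw [circCommutator, circ_assoc, sinv_circ_rev]

lemma circ_circCommutator (x a : A) : circ (circCommutator x a) (circ a x) = circ x a := by
  simp only [circCommutator, circ_assoc, sinv_circ_cancel, sinv_circ, circ_one]

/-! ### Ideal-like sets and congruence machinery -/

structure IdealLike (S : Set A) : Prop where
  one_mem : (1 : A) ∈ S
  mul_mem : ∀ {a b : A}, a ∈ S → b ∈ S → a * b ∈ S
  inv_mem : ∀ {a : A}, a ∈ S → a⁻¹ ∈ S
  conj_mem : ∀ (a : A) {z : A}, z ∈ S → a * z * a⁻¹ ∈ S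
  lam_mem : ∀ (a : A) {z : A}, z ∈ S → lam a z ∈ S
  star_mem : ∀ {z : A}, z ∈ S → ∀ a : A, star z a ∈ S

/-- `u ≡ v` modulo `S` (right difference). -/
def Req (S : Set A) (u v : A) : Prop := u * v⁻¹ ∈ S

namespace IdealLike

variable {S : Set A} (h : IdealLike S)
include h

lemma sinv_mem {z : A} (hz : z ∈ S) : sinv z ∈ S := by
  rw [show sinv z = lam (sinv z) z⁻¹ from (lam_sinv_inv z).symm]
  exact h.lam_mem _ (h.inv_mem hz)

lemma circ_mem {s t : A} (hs : s ∈ S) (ht : t ∈ S) : circ s t ∈ S := by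
  rw [circ_eq]; exact h.mul_mem hs (h.lam_mem _ ht)

lemma oconj_mem (a : A) {s : A} (hs : s ∈ S) : circ (circ a s) (sinv a) ∈ S := by
  have e : circ (circ a s) (sinv a)
      = a * (lam a s * lam a (star s (sinv a))) * a⁻¹ := by
    rw [circ_eq (circ a s), lam_circ, lam_eq_star_mul s, lam_mul, lam_sinv, circ_eq a s]
    group
  rw [e]
  exact h.conj_mem a (h.mul_mem (h.lam_mem _ hs) (h.lam_mem _ (h.star_mem hs _)))

lemma req_refl (u : A) : Req S u u := by
  show u * u⁻¹ ∈ S; rw [mul_inv_cancel]; exact h.one_mem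

lemma req_symm {u v : A} (huv : Req S u v) : Req S v u := by
  have := h.inv_mem huv
  rwa [show (u * v⁻¹)⁻¹ = v * u⁻¹ by group] at this

lemma req_trans {u v w : A} (h1 : Req S u v) (h2 : Req S v w) : Req S u w := by
  have := h.mul_mem h1 h2
  rwa [show u * v⁻¹ * (v * w⁻¹) = u * w⁻¹ by group] at this

omit h in lemma req_of_mem {s : A} (hs : s ∈ S) (v : A) : Req S (s * v) v := by
  show s * v * v⁻¹ ∈ S; rwa [mul_inv_cancel_right]

lemma req_mul_left (c : A) {u v : A} (huv : Req S u v) : Req S (c * u) (c * v) := by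
  have := h.conj_mem c huv
  rwa [show c * (u * v⁻¹) * c⁻¹ = c * u * (c * v)⁻¹ by group] at this

omit h in lemma req_mul_right (c : A) {u v : A} (huv : Req S u v) : Req S (u * c) (v * c) := by
  show u * c * (v * c)⁻¹ ∈ S
  rwa [show u * c * (v * c)⁻¹ = u * v⁻¹ by group]

lemma mem_comm_mul {u v : A} : u * v⁻¹ ∈ S ↔ v⁻¹ * u ∈ S := by
  constructor
  · intro hs
    have := h.conj_mem v⁻¹ hs
    rwa [show v⁻¹ * (u * v⁻¹) * v⁻¹⁻¹ = v⁻¹ * u by group] at this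
  · intro hs
    have := h.conj_mem v hs
    rwa [show v * (v⁻¹ * u) * v⁻¹ = u * v⁻¹ by group] at this

lemma mem_iff_ocirc_left {u v : A} : v⁻¹ * u ∈ S ↔ circ (sinv v) u ∈ S := by
  constructor
  · intro hs
    have e : u = circ v (lam (sinv v) (v⁻¹ * u)) := by
      rw [circ_eq, ← lam_circ, circ_sinv, lam_one_left, mul_inv_cancel_left]
    have e2 : circ (sinv v) u = lam (sinv v) (v⁻¹ * u) := by
      conv_lhs => rw [e]
      rw [sinv_circ_cancel]
    rw [e2]; exact h.lam_mem _ hs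
  · intro hs
    have e : u = circ v (circ (sinv v) u) := (circ_sinv_cancel v u).symm
    have e2 : v⁻¹ * u = lam v (circ (sinv v) u) := by
      conv_lhs => rw [e]
      rw [circ_eq v (circ (sinv v) u), inv_mul_cancel_left]
    rw [e2]; exact h.lam_mem _ hs

lemma mem_ocirc_comm {u v : A} : circ (sinv v) u ∈ S ↔ circ u (sinv v) ∈ S := by
  constructor
  · intro hs
    have := h.oconj_mem u hs
    rwa [show circ (circ u (circ (sinv v) u)) (sinv u) = circ u (sinv v) by
      rw [circ_assoc, circ_assoc, circ_sinv, circ_one]] at this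
  · intro hs
    have := h.oconj_mem (sinv v) hs
    rwa [show circ (circ (sinv v) (circ u (sinv v))) (sinv (sinv v)) = circ (sinv v) u by
      rw [sinv_sinv, circ_assoc, circ_assoc, sinv_circ, circ_one]] at this

lemma req_ocirc {u v : A} : Req S u v ↔ circ u (sinv v) ∈ S := by
  rw [show Req S u v ↔ u * v⁻¹ ∈ S from Iff.rfl, h.mem_comm_mul, h.mem_iff_ocirc_left,
    h.mem_ocirc_comm]

lemma req_ocirc_left {u v : A} : Req S u v ↔ circ (sinv v) u ∈ S := by
  rw [h.req_ocirc, h.mem_ocirc_comm]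

lemma req_circ_left (c : A) {u v : A} (huv : Req S u v) : Req S (circ c u) (circ c v) := by
  rw [h.req_ocirc_left] at huv ⊢
  rwa [show circ (sinv (circ c v)) (circ c u) = circ (sinv v) u by
    rw [sinv_circ_rev, circ_assoc, sinv_circ_cancel]]

lemma req_circ_right (c : A) {u v : A} (huv : Req S u v) : Req S (circ u c) (circ v c) := by
  rw [h.req_ocirc_left] at huv ⊢
  have := h.oconj_mem (sinv c) huv
  rwa [show circ (circ (sinv c) (circ (sinv v) u)) (sinv (sinv c))
      = circ (sinv (circ v c)) (circ u c) by
    rw [sinv_sinv, sinv_circ_rev]; simp only [circ_assoc]] at this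

lemma req_lam_sub {u v : A} (hd : v⁻¹ * u ∈ S) (a : A) : Req S (lam u a) (lam v a) := by
  have hs : circ (sinv v) u ∈ S := h.mem_iff_ocirc_left.mp hd
  have e : u = circ v (circ (sinv v) u) := (circ_sinv_cancel v u).symm
  have e2 : lam u a = lam v (star (circ (sinv v) u) a) * lam v a := by
    conv_lhs => rw [e]
    rw [lam_circ, lam_eq_star_mul (circ (sinv v) u) a, lam_mul]
  show lam u a * (lam v a)⁻¹ ∈ S
  rw [e2, mul_inv_cancel_right]
  exact h.lam_mem _ (h.star_mem hs a)

lemma req_circCommutator {z a : A} : circCommutator z a ∈ S ↔ Req S (circ z a) (circ a z) := by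
  rw [circCommutator_eq, ← h.req_ocirc]

/-! ### annStep lemmas -/

omit h in lemma req_lam_annStep {z : A} (hz : z ∈ annStep S) (a : A) : Req S (lam z a) a := by
  rw [lam_eq_star_mul]; exact req_of_mem (hz a).1 a

lemma star_sinv_annStep {z : A} (hz : z ∈ annStep S) (c : A) : star (sinv z) c ∈ S := by
  have h1 : star z (lam (sinv z) c) ∈ S := (hz (lam (sinv z) c)).1
  rw [star_eq, ← lam_circ, circ_sinv, lam_one_left] at h1
  have h2 : Req S (lam (sinv z) c) c := h.req_symm h1
  exact h2

lemma comm_inv_annStep {z : A} (hz : z ∈ annStep S) (a : A) : a * z * a⁻¹ * z⁻¹ ∈ S := by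
  have h1 := h.inv_mem (hz a).2.1
  rwa [show (z * a * z⁻¹ * a⁻¹)⁻¹ = a * z * a⁻¹ * z⁻¹ by group] at h1

/-- Key Lemma: star of anything with an element of `annStep S` lands in `S`. -/
lemma star_into_annStep {z : A} (hz : z ∈ annStep S) (a : A) : star a z ∈ S := by
  have h1 : Req S (circ a z) (circ z a) := h.req_symm (h.req_circCommutator.mp (hz a).2.2)
  have h2 : Req S (lam z a) a := req_lam_annStep hz a
  have h3 : Req S (circ z a) (z * a) := by
    rw [circ_eq z a]; exact h.req_mul_left z h2
  have h4 : Req S (a⁻¹ * (z * a)) z := by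
    have h5 := h.inv_mem (hz a⁻¹).2.1
    show a⁻¹ * (z * a) * z⁻¹ ∈ S
    rwa [show (z * a⁻¹ * z⁻¹ * a⁻¹⁻¹)⁻¹ = a⁻¹ * (z * a) * z⁻¹ by group] at h5
  have : Req S (lam a z) z :=
    h.req_trans (h.req_mul_left a⁻¹ h1) (h.req_trans (h.req_mul_left a⁻¹ h3) h4)
  exact this

omit h in
lemma one_annStep : (1 : A) ∈ annStep S → True := fun _ => trivial

omit h in lemma annStep_one (h1 : (1:A) ∈ S) : (1 : A) ∈ annStep S := by
  intro a
  refine ⟨?_, ?_, ?_⟩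
  · rw [star_one_left]; exact h1
  · rw [show (1:A) * a * 1⁻¹ * a⁻¹ = 1 by group]; exact h1
  · rw [show circCommutator (1:A) a = 1 by
      simp [circCommutator, one_circ, sinv_one, circ_one, circ_sinv]]
    exact h1

lemma annStep_absorb {s z : A} (hs : s ∈ S) (hz : z ∈ annStep S) : s * z ∈ annStep S := by
  intro a
  have hd : z⁻¹ * (s * z) ∈ S := by
    have := h.conj_mem z⁻¹ hs
    rwa [show z⁻¹ * s * z⁻¹⁻¹ = z⁻¹ * (s * z) by group] at this
  refine ⟨?_, ?_, ?_⟩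
  · have h1 : Req S (lam (s*z) a) (lam z a) := h.req_lam_sub hd a
    have h2 : Req S (lam (s*z) a) a := h.req_trans h1 (req_lam_annStep hz a)
    exact h2
  · rw [show s * z * a * (s * z)⁻¹ * a⁻¹
        = s * (z * a * z⁻¹ * a⁻¹) * (a * s⁻¹ * a⁻¹) by group]
    exact h.mul_mem (h.mul_mem hs (hz a).2.1) (h.conj_mem a (h.inv_mem hs))
  · rw [h.req_circCommutator]
    have e1 : Req S (s * z) z := req_of_mem hs z
    have c1 : Req S (circ (s*z) a) (circ z a) := h.req_circ_right a e1
    have c2 : Req S (circ z a) (circ a z) := h.req_circCommutator.mp (hz a).2.2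
    have c3 : Req S (circ a z) (circ a (s*z)) := h.req_circ_left a (h.req_symm e1)
    exact h.req_trans c1 (h.req_trans c2 c3)

lemma subset_annStep : S ⊆ annStep S := by
  intro s hs
  have := h.annStep_absorb hs (annStep_one h.one_mem)
  rwa [mul_one] at this

lemma annStep_mul {x y : A} (hx : x ∈ annStep S) (hy : y ∈ annStep S) :
    x * y ∈ annStep S := by
  intro a
  have hd : (circ x y)⁻¹ * (x * y) ∈ S := by
    have := h.conj_mem y⁻¹ (h.inv_mem (hx y).1)
    rwa [show y⁻¹ * (star x y)⁻¹ * y⁻¹⁻¹ = (circ x y)⁻¹ * (x * y) by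
      rw [circ_eq, lam_eq_star_mul]; group] at this
  have hreq : Req S (x * y) (circ x y) := by
    have h1 : x * y * (circ x y)⁻¹ ∈ S := h.mem_comm_mul.mpr hd
    exact h1
  refine ⟨?_, ?_, ?_⟩
  · have h1 : Req S (lam (x*y) a) (lam (circ x y) a) := h.req_lam_sub hd a
    have h2 : lam (circ x y) a = lam x (star y a) * lam x a := by
      rw [lam_circ, lam_eq_star_mul y a, lam_mul]
    have h3 : Req S (lam (circ x y) a) (lam x a) := by
      rw [h2]; exact req_of_mem (h.lam_mem x (hy a).1) _
    have h4 : Req S (lam (x*y) a) a :=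
      h.req_trans h1 (h.req_trans h3 (req_lam_annStep hx a))
    exact h4
  · rw [show x * y * a * (x * y)⁻¹ * a⁻¹
        = x * (y * a * y⁻¹ * a⁻¹) * x⁻¹ * (x * a * x⁻¹ * a⁻¹) by group]
    exact h.mul_mem (h.conj_mem x (hy a).2.1) (hx a).2.1
  · rw [h.req_circCommutator]
    have c1 : Req S (circ (x*y) a) (circ (circ x y) a) := h.req_circ_right a hreq
    have c2 : Req S (circ x (circ y a)) (circ x (circ a y)) :=
      h.req_circ_left x (h.req_circCommutator.mp (hy a).2.2)
    have c3 : Req S (circ (circ x a) y) (circ (circ a x) y) :=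
      h.req_circ_right y (h.req_circCommutator.mp (hx a).2.2)
    have c4 : Req S (circ a (circ x y)) (circ a (x * y)) :=
      h.req_circ_left a (h.req_symm hreq)
    rw [circ_assoc x y a] at c1
    rw [← circ_assoc x a y] at c2
    rw [circ_assoc a x y] at c3
    exact h.req_trans c1 (h.req_trans c2 (h.req_trans c3 c4))

lemma annStep_inv {x : A} (hx : x ∈ annStep S) : x⁻¹ ∈ annStep S := by
  have hs0 : sinv x * x ∈ S := by
    have := h.star_sinv_annStep hx x⁻¹
    rwa [star_eq, lam_sinv_inv, inv_inv] at this
  intro a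
  refine ⟨?_, ?_, ?_⟩
  · have hd : (sinv x)⁻¹ * x⁻¹ ∈ S := by
      have h1 : x * (sinv x * x) * x⁻¹ ∈ S := h.conj_mem x hs0
      have h2 := h.inv_mem h1
      rwa [show (x * (sinv x * x) * x⁻¹)⁻¹ = (sinv x)⁻¹ * x⁻¹ by group] at h2
    have h1 : Req S (lam x⁻¹ a) (lam (sinv x) a) := h.req_lam_sub hd a
    have h2 : Req S (lam (sinv x) a) a := h.star_sinv_annStep hx a
    exact h.req_trans h1 h2
  · have h1 := h.comm_inv_annStep hx a
    have h2 := h.conj_mem x⁻¹ h1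
    rwa [show x⁻¹ * (a * x * a⁻¹ * x⁻¹) * x⁻¹⁻¹ = x⁻¹ * a * x⁻¹⁻¹ * a⁻¹ by group] at h2
  · rw [h.req_circCommutator]
    have e1 : Req S x⁻¹ (sinv x) := by
      show x⁻¹ * (sinv x)⁻¹ ∈ S
      have := h.inv_mem hs0
      rwa [show (sinv x * x)⁻¹ = x⁻¹ * (sinv x)⁻¹ by group] at this
    have hxc : Req S (circ x a) (circ a x) := h.req_circCommutator.mp (hx a).2.2
    have c2 : Req S (circ (sinv x) a) (circ a (sinv x)) := by
      have d1 : Req S (circ (sinv x) (circ (circ x a) (sinv x)))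
          (circ (sinv x) (circ (circ a x) (sinv x))) :=
        h.req_circ_left (sinv x) (h.req_circ_right (sinv x) hxc)
      rw [show circ (sinv x) (circ (circ x a) (sinv x)) = circ a (sinv x) by
            rw [← circ_assoc, ← circ_assoc, sinv_circ, one_circ],
          show circ (sinv x) (circ (circ a x) (sinv x)) = circ (sinv x) a by
            simp only [circ_assoc, circ_sinv, circ_one]] at d1
      exact h.req_symm d1
    have c1 : Req S (circ x⁻¹ a) (circ (sinv x) a) := h.req_circ_right a e1
    have c3 : Req S (circ a (sinv x)) (circ a x⁻¹) := h.req_circ_left a (h.req_symm e1)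
    exact h.req_trans c1 (h.req_trans c2 c3)

lemma annStep_conj (a : A) {z : A} (hz : z ∈ annStep S) : a * z * a⁻¹ ∈ annStep S := by
  have hs : a * z * a⁻¹ * z⁻¹ ∈ S := h.comm_inv_annStep hz a
  have := h.annStep_absorb hs hz
  rwa [show a * z * a⁻¹ * z⁻¹ * z = a * z * a⁻¹ by group] at this

lemma annStep_lam (a : A) {z : A} (hz : z ∈ annStep S) : lam a z ∈ annStep S := by
  rw [lam_eq_star_mul]
  exact h.annStep_absorb (h.star_into_annStep hz a) hz

end IdealLike

/-! ### IdealLike structure on annSeries -/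

lemma annSeries_idealLike (k : ℕ) : IdealLike (annSeries (A := A) k) := by
  induction k with
  | zero =>
      have h0 : annSeries (A := A) 0 = {1} := rfl
      rw [h0]
      constructor
      · exact Set.mem_singleton _
      · intro a b ha hb
        rw [Set.mem_singleton_iff] at ha hb ⊢
        rw [ha, hb, mul_one]
      · intro a ha
        rw [Set.mem_singleton_iff] at ha ⊢
        rw [ha, inv_one]
      · intro a z hz
        rw [Set.mem_singleton_iff] at hz ⊢
        rw [hz, mul_one, mul_inv_cancel]
      · intro a z hz
        rw [Set.mem_singleton_iff] at hz ⊢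
        rw [hz, lam_one_right]
      · intro z hz a
        rw [Set.mem_singleton_iff] at hz ⊢
        rw [hz, star_one_left]
  | succ k ih =>
      constructor
      · exact IdealLike.annStep_one ih.one_mem
      · intro a b ha hb; exact ih.annStep_mul ha hb
      · intro a ha; exact ih.annStep_inv ha
      · intro a z hz; exact ih.annStep_conj a hz
      · intro a z hz; exact ih.annStep_lam a hz
      · intro z hz a; exact ih.subset_annStep (hz a).1

lemma annSeries_subset_succ (k : ℕ) :
    annSeries (A := A) k ⊆ annSeries (A := A) (k + 1) :=
  (annSeries_idealLike k).subset_annStep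

/-- The annihilator series terms as subgroups. -/
def annSub (k : ℕ) : Subgroup A where
  carrier := annSeries k
  one_mem' := (annSeries_idealLike k).one_mem
  mul_mem' := (annSeries_idealLike k).mul_mem
  inv_mem' := (annSeries_idealLike k).inv_mem

/-! ### Left series facts -/

lemma leftSeries_succ_le (m : ℕ) :
    leftSeries (A := A) (m + 1) ≤ leftSeries (A := A) m := by
  induction m with
  | zero => exact le_top
  | succ m ih =>
      apply Subgroup.closure_mono
      rintro z ⟨x, hx, y, hy, rfl⟩
      exact ⟨x, hx, y, ih hy, rfl⟩

lemma star_mem_leftSeries_succ {b : A} (v : A) (m : ℕ) (hb : b ∈ leftSeries (A := A) m) :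
    star v b ∈ leftSeries (A := A) (m + 1) :=
  Subgroup.subset_closure ⟨v, Set.mem_univ v, b, hb, rfl⟩

/-! ### The key lemma -/

lemma key_lemma (m : ℕ) : ∀ (k : ℕ) (x y : A), x ∈ annSeries (A := A) (k + m + 1) →
    y ∈ leftSeries (A := A) m → star x y ∈ annSeries (A := A) k := by
  induction m with
  | zero =>
      intro k x y hx _
      have hx' : x ∈ annStep (annSeries (A := A) k) := hx
      exact (hx' y).1
  | succ m ih =>
      intro k x y hx hy
      have hS := annSeries_idealLike (A := A) k
      have hx' : x ∈ annStep (annSeries (A := A) (k + m + 1)) := by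
        have e : k + (m + 1) + 1 = (k + m + 1) + 1 := by omega
        rw [e] at hx
        exact hx
      have hgen : ∀ a ∈ (Set.univ : Set A), ∀ b ∈ (leftSeries (A := A) m : Set A),
          star x (star a b) ∈ annSeries (A := A) k := by
        intro a _ b hb
        have hu : star x b ∈ annSeries (A := A) (k + 1) := by
          apply ih (k + 1) x b _ hb
          have e : (k + 1) + m + 1 = k + (m + 1) + 1 := by omega
          rw [e]
          exact hx
        have hu' : star x b ∈ annStep (annSeries (A := A) k) := hu
        have hq : circCommutator x a ∈ annSeries (A := A) (k + m + 1) := (hx' a).2.2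
        have hvb : star (circ a x) b ∈ leftSeries (A := A) m :=
          leftSeries_succ_le m (star_mem_leftSeries_succ (circ a x) m hb)
        have s1 : star (circCommutator x a) (star (circ a x) b) ∈ annSeries (A := A) k :=
          ih k _ _ hq hvb
        have s3 : star (circCommutator x a) b ∈ annSeries (A := A) k := ih k _ _ hq hb
        have s2 : star a (star x b) ∈ annSeries (A := A) k := hS.star_into_annStep hu' a
        have c : star x b * star a b * (star x b)⁻¹ * (star a b)⁻¹ ∈ annSeries (A := A) k :=
          (hu' (star a b)).2.1
        have h1 := star_circ_left x a b
        rw [← circ_circCommutator x a,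
          star_circ_left (circCommutator x a) (circ a x) b] at h1
        have h4 := star_circ_left a x b
        have h2 : star x (star a b) = star (circCommutator x a) (star (circ a x) b)
            * star (circ a x) b * star (circCommutator x a) b
            * (star x b)⁻¹ * (star a b)⁻¹ := by
          rw [h1]; group
        have h5 : star x (star a b) = star (circCommutator x a) (star (circ a x) b)
            * star a (star x b)
            * ((star x b * star a b) * star (circCommutator x a) b * (star x b * star a b)⁻¹)
            * (star x b * star a b * (star x b)⁻¹ * (star a b)⁻¹) := by
          rw [h2, h4]; group
        rw [h5]
        exact hS.mul_mem (hS.mul_mem (hS.mul_mem s1 s2) (hS.conj_mem _ s3)) c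
      -- now induct over the closure
      have hy' : y ∈ starSub (Set.univ : Set A) (leftSeries (A := A) m : Set A) := hy
      refine Subgroup.closure_induction
        (p := fun z _ => star x z ∈ annSeries (A := A) k) ?_ ?_ ?_ ?_ hy'
      · rintro z ⟨a, ha, b, hb, rfl⟩
        exact hgen a ha b hb
      · show star x 1 ∈ annSeries (A := A) k
        rw [star_one_right]
        exact hS.one_mem
      · intro z w _ _ hz hw
        show star x (z * w) ∈ annSeries (A := A) k
        have hz' : star x z ∈ annSeries (A := A) k := hz
        have hw' : star x w ∈ annSeries (A := A) k := hw
        rw [star_mul_right]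
        exact hS.mul_mem hz' (hS.conj_mem z hw')
      · intro z _ hz
        show star x z⁻¹ ∈ annSeries (A := A) k
        have hz' : star x z ∈ annSeries (A := A) k := hz
        rw [star_inv_right]
        have := hS.conj_mem z⁻¹ (hS.inv_mem hz')
        rwa [inv_inv] at this

/-! ### The main theorem -/

/-- Ann_n(A) * A^(n-k) is contained in Ann_k(A) for n at least 1 and k at most n-1.
(Here leftSeries m = A^(m+1), so A^(n-k) = leftSeries (n-k-1).) -/
theorem annSeries_star_leftSeries {A : Type*} [SkewBrace A] :
    ∀ n k : ℕ, 1 ≤ n → k < n →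
      ∀ z ∈ starSub (annSeries (A := A) n)
          ((leftSeries (A := A) (n - k - 1) : Subgroup A) : Set A),
        z ∈ annSeries (A := A) k := by
  intro n k _ hk z hz
  set m := n - k - 1 with hm
  have hnk : k + m + 1 = n := by omega
  have hle : starSub (annSeries (A := A) n)
      ((leftSeries (A := A) m : Subgroup A) : Set A) ≤ annSub k := by
    rw [starSub, Subgroup.closure_le]
    rintro w ⟨x, hx, y, hy, rfl⟩
    rw [← hnk] at hx
    exact key_lemma m k x y hx hy
  exact hle hz

end SB
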